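/- arXiv:1001.3269 — 2 statements merged into one kernel-verified Lean document; each statement's English description precedes it below -/
import Mathlib

section
/- Let 𝒯(𝒩) be a continuous nest algebra and 𝔏 a norm closed Lie ideal of 𝒯(𝒩). The homomorphism P ↦ P′ on 𝒩 defined by P′ = ⋁{P_y ∈ 𝒩 : x⊗y ∈ 𝔏 and P̂_x < P} is left order continuous: for every subset ℳ ⊆ 𝒩, (⋁ℳ)′ = ⋁{P′ : P ∈ ℳ}. -/
noncomputable section

variable {E : Type*} [NormedAddCommGroup E] [InnerProductSpace ℂ E]

/-- The rank one operator `x ⊗ y : u ↦ ⟨u,x⟩y` (inner product linear in `u`). -/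
def rankOne (x y : E) : E →L[ℂ] E := (innerSL ℂ x).smulRight y

/-- Order on projections: `P ≤ Q` iff `Q ∘ P = P`. -/
def projLE (P Q : E →L[ℂ] E) : Prop := Q.comp P = P

def projLT (P Q : E →L[ℂ] E) : Prop := projLE P Q ∧ P ≠ Q

/-- An orthogonal projection: idempotent and self-adjoint. -/
def IsProjOp (P : E →L[ℂ] E) : Prop :=
  P * P = P ∧ ∀ x y : E, (inner ℂ (P x) y : ℂ) = inner ℂ x (P y)

/-- A nest: a totally ordered family of orthogonal projections containing `0` and `I`. -/
structure IsNest (N : Set (E →L[ℂ] E)) : Prop where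
  proj : ∀ P ∈ N, IsProjOp P
  total : ∀ P ∈ N, ∀ Q ∈ N, projLE P Q ∨ projLE Q P
  zero_mem : (0 : E →L[ℂ] E) ∈ N
  one_mem : (1 : E →L[ℂ] E) ∈ N

/-- `S` is the supremum in `N` of the subset `M`. -/
def IsSupIn (N M : Set (E →L[ℂ] E)) (S : E →L[ℂ] E) : Prop :=
  S ∈ N ∧ (∀ P ∈ M, projLE P S) ∧ ∀ Q ∈ N, (∀ P ∈ M, projLE P Q) → projLE S Q

/-- `S` is the infimum in `N` of the subset `M`. -/
def IsInfIn (N M : Set (E →L[ℂ] E)) (S : E →L[ℂ] E) : Prop :=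
  S ∈ N ∧ (∀ P ∈ M, projLE S P) ∧ ∀ Q ∈ N, (∀ P ∈ M, projLE Q P) → projLE Q S

/-- A complete nest: every subset has a supremum and an infimum in the nest. -/
structure IsCompleteNest (N : Set (E →L[ℂ] E)) extends IsNest N : Prop where
  exists_sup : ∀ M ⊆ N, ∃ S, IsSupIn N M S
  exists_inf : ∀ M ⊆ N, ∃ S, IsInfIn N M S

/-- A continuous nest: `P₋ = P` for every `P` in the nest. -/
def IsContinuousNest (N : Set (E →L[ℂ] E)) : Prop :=
  IsCompleteNest N ∧ ∀ P ∈ N, P ≠ 0 → IsSupIn N {Q | Q ∈ N ∧ projLT Q P} P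

/-- The nest algebra of `N`. -/
def nestAlg (N : Set (E →L[ℂ] E)) : Set (E →L[ℂ] E) :=
  {T | ∀ P ∈ N, (1 - P) * T * P = 0}

/-- A norm closed Lie ideal of the nest algebra. -/
def IsLieIdeal (N L : Set (E →L[ℂ] E)) : Prop :=
  L ⊆ nestAlg N ∧ IsClosed L ∧ (0 : E →L[ℂ] E) ∈ L ∧
    (∀ S ∈ L, ∀ T ∈ L, S + T ∈ L) ∧ (∀ c : ℂ, ∀ S ∈ L, c • S ∈ L) ∧
    (∀ S ∈ L, ∀ T ∈ nestAlg N, S * T - T * S ∈ L)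

/-- `{Q ∈ N : Q z = z}`; its infimum in `N` is `P_z`. -/
def fixSet (N : Set (E →L[ℂ] E)) (z : E) : Set (E →L[ℂ] E) := {Q | Q ∈ N ∧ Q z = z}

/-- `{Q ∈ N : Q z = 0}`; its supremum in `N` is `P̂_z`. -/
def killSet (N : Set (E →L[ℂ] E)) (z : E) : Set (E →L[ℂ] E) := {Q | Q ∈ N ∧ Q z = 0}

/-- `{P_y : x⊗y ∈ L ∧ P̂_x < P}`; its supremum in `N` is `P′`. -/
def primeSet (N L : Set (E →L[ℂ] E)) (P : E →L[ℂ] E) : Set (E →L[ℂ] E) :=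
  {R | ∃ x y : E, x ≠ 0 ∧ y ≠ 0 ∧ rankOne x y ∈ L ∧ IsInfIn N (fixSet N y) R ∧
    ∃ Px, IsSupIn N (killSet N x) Px ∧ projLT Px P}

end

/-!
`P ↦ P′` only sees `P` through the strict inequalities `P̂_x < P`. Below the supremum `S` of `ℳ`
in a nest, `Q < S` holds exactly when `Q < P` for some `P ∈ ℳ`, so the set whose supremum is `S′`
is the union of the sets whose suprema are the `P′`, `P ∈ ℳ`.
-/

section

variable {E : Type*} [NormedAddCommGroup E] [InnerProductSpace ℂ E]

theorem IsProjOp.projLE_refl {P : E →L[ℂ] E} (hP : IsProjOp P) : projLE P P := hP.1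

theorem projLE_trans {P Q R : E →L[ℂ] E} (hPQ : projLE P Q) (hQR : projLE Q R) :
    projLE P R := by
  unfold projLE at *
  rw [← hPQ, ← ContinuousLinearMap.comp_assoc, hQR]

theorem projLE_antisymm {P Q : E →L[ℂ] E} (hP : IsProjOp P) (hQ : IsProjOp Q)
    (hPQ : projLE P Q) (hQP : projLE Q P) : P = Q := by
  ext u
  refine ext_inner_right ℂ fun v => ?_
  have hQPu : Q (P u) = P u := by rw [← ContinuousLinearMap.comp_apply, hPQ]
  have hPQv : P (Q v) = Q v := by rw [← ContinuousLinearMap.comp_apply, hQP]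
  calc (inner ℂ (P u) v : ℂ) = inner ℂ (Q (P u)) v := by rw [hQPu]
    _ = inner ℂ u (P (Q v)) := by rw [hQ.2, hP.2]
    _ = inner ℂ (Q u) v := by rw [hPQv, hQ.2]

theorem projLT_of_projLT_of_projLE {P Q R : E →L[ℂ] E} (hP : IsProjOp P) (hQ : IsProjOp Q)
    (hPQ : projLT P Q) (hQR : projLE Q R) : projLT P R := by
  refine ⟨projLE_trans hPQ.1 hQR, ?_⟩
  rintro rfl
  exact hPQ.2 (projLE_antisymm hP hQ hPQ.1 hQR)

namespace IsNest

variable {N L : Set (E →L[ℂ] E)}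

theorem exists_projLT_of_projLT_sup (hN : IsNest N) {M : Set (E →L[ℂ] E)} (hM : M ⊆ N)
    {S : E →L[ℂ] E} (hS : IsSupIn N M S) {Q : E →L[ℂ] E} (hQ : Q ∈ N) (hQS : projLT Q S) :
    ∃ P ∈ M, projLT Q P := by
  by_contra! hnone
  have hQ_ub : ∀ P ∈ M, projLE P Q := by
    intro P hPM
    rcases hN.total P (hM hPM) Q hQ with hPQ | hQP
    · exact hPQ
    · by_cases hQP' : Q = P
      · exact hQP' ▸ (hN.proj Q hQ).projLE_refl
      · exact absurd ⟨hQP, hQP'⟩ (hnone P hPM)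
  exact hQS.2 (projLE_antisymm (hN.proj Q hQ) (hN.proj S hS.1) hQS.1 (hS.2.2 Q hQ hQ_ub))

theorem primeSet_mono (hN : IsNest N) {P Q : E →L[ℂ] E} (hP : P ∈ N) (hPQ : projLE P Q) :
    primeSet N L P ⊆ primeSet N L Q := by
  rintro R ⟨x, y, hx, hy, hxy, hR, Px, hPx, hPxP⟩
  exact ⟨x, y, hx, hy, hxy, hR, Px, hPx,
    projLT_of_projLT_of_projLE (hN.proj Px hPx.1) (hN.proj P hP) hPxP hPQ⟩

theorem primeSet_sup_subset (hN : IsNest N) {M : Set (E →L[ℂ] E)} (hM : M ⊆ N)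
    {S : E →L[ℂ] E} (hS : IsSupIn N M S) : primeSet N L S ⊆ ⋃ P ∈ M, primeSet N L P := by
  rintro R ⟨x, y, hx, hy, hxy, hR, Px, hPx, hPxS⟩
  obtain ⟨P, hPM, hPxP⟩ := hN.exists_projLT_of_projLT_sup hM hS hPx.1 hPxS
  exact Set.mem_biUnion hPM ⟨x, y, hx, hy, hxy, hR, Px, hPx, hPxP⟩

end IsNest

end

theorem prime_map_left_order_continuous_general {E : Type*} [NormedAddCommGroup E] [InnerProductSpace ℂ E]
    {N L : Set (E →L[ℂ] E)} (hN : IsContinuousNest N)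
    (φ : (E →L[ℂ] E) → E →L[ℂ] E)
    (hφ : ∀ P ∈ N, IsSupIn N (primeSet N L P) (φ P))
    (M : Set (E →L[ℂ] E)) (hM : M ⊆ N) (S : E →L[ℂ] E) (hS : IsSupIn N M S) :
    IsSupIn N (φ '' M) (φ S) := by
  have hnest : IsNest N := hN.1.toIsNest
  have hφS := hφ S hS.1
  refine ⟨hφS.1, ?_, fun Q hQ hQ_ub => hφS.2.2 Q hQ fun R hR => ?_⟩
  · rintro _ ⟨P, hPM, rfl⟩
    refine (hφ P (hM hPM)).2.2 (φ S) hφS.1 fun R hR => hφS.2.1 R ?_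
    exact hnest.primeSet_mono (hM hPM) (hS.2.1 P hPM) hR
  · obtain ⟨P, hPM, hRP⟩ := Set.mem_iUnion₂.mp (hnest.primeSet_sup_subset hM hS hR)
    exact projLE_trans ((hφ P (hM hPM)).2.1 R hRP) (hQ_ub (φ P) ⟨P, hPM, rfl⟩)

/-- Proposition 4.1 (second part): the homomorphism `P ↦ P′` is left order continuous:
`(⋁ℳ)′ = ⋁{P′ : P ∈ ℳ}` for every `ℳ ⊆ 𝒩`. -/
theorem prime_map_left_order_continuous {E : Type*} [NormedAddCommGroup E] [InnerProductSpace ℂ E] [CompleteSpace E]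
    {N L : Set (E →L[ℂ] E)} (hN : IsContinuousNest N) (hL : IsLieIdeal N L)
    (φ : (E →L[ℂ] E) → E →L[ℂ] E)
    (hφ : ∀ P ∈ N, IsSupIn N (primeSet N L P) (φ P))
    (M : Set (E →L[ℂ] E)) (hM : M ⊆ N) (S : E →L[ℂ] E) (hS : IsSupIn N M S) :
    IsSupIn N (φ '' M) (φ S) :=
  prime_map_left_order_continuous_general hN φ hφ M hM S hS
end

section
/- Let 𝒩 be a nest and φ : 𝒩 → 𝒩 an order preserving map. Then the set 𝔅 = {S ∈ 𝒯(𝒩) : φ(P)⊥ S P = 0 for all P ∈ 𝒩} is a norm closed two-sided (associative) ideal of the nest algebra 𝒯(𝒩). -/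
/-! `(1 - A) * T * A = 0` says that `T` leaves the range of `A` invariant. If `S` maps the range of
`P` into that of `φ P`, then so does `T * S` for `T ∈ 𝒯(𝒩)`, because `T` leaves the range of
`φ P ∈ 𝒩` invariant, and so does `S * T`, because `T` leaves the range of `P` invariant. Each
condition `A * S * B = 0` is closed, as multiplication is continuous. -/

section Ring

variable {R : Type*} [Ring R] {A P S T : R}

theorem mul_eq_self_of_one_sub_mul_eq_zero {X : R} (h : (1 - A) * X = 0) : A * X = X := by
  rwa [sub_mul, one_mul, sub_eq_zero, eq_comm] at h

theorem one_sub_mul_mul_mul_eq_zero_of_left (hT : (1 - A) * T * A = 0)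
    (hS : (1 - A) * S * P = 0) : (1 - A) * (T * S) * P = 0 := by
  have hSP : A * (S * P) = S * P := mul_eq_self_of_one_sub_mul_eq_zero (by rwa [← mul_assoc])
  calc (1 - A) * (T * S) * P = (1 - A) * T * (A * (S * P)) := by rw [hSP]; noncomm_ring
    _ = 0 := by rw [← mul_assoc, hT, zero_mul]

theorem one_sub_mul_mul_mul_eq_zero_of_right (hT : (1 - P) * T * P = 0)
    (hS : (1 - A) * S * P = 0) : (1 - A) * (S * T) * P = 0 := by
  have hTP : P * (T * P) = T * P := mul_eq_self_of_one_sub_mul_eq_zero (by rwa [← mul_assoc])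
  calc (1 - A) * (S * T) * P = (1 - A) * S * (P * (T * P)) := by rw [hTP]; noncomm_ring
    _ = 0 := by rw [← mul_assoc, hS, zero_mul]

end Ring

theorem isClosed_setOf_forall_mul_mul_eq_zero {R ι : Type*} [Ring R] [TopologicalSpace R]
    [IsTopologicalRing R] [T1Space R] (s : Set ι) (A B : ι → R) :
    IsClosed {S : R | ∀ i ∈ s, A i * S * B i = 0} := by
  simp only [Set.ofPred_forall]
  exact isClosed_biInter fun i _ =>
    isClosed_singleton.preimage ((continuous_const.mul continuous_id).mul continuous_const)

theorem prime_condition_assoc_ideal_general {E : Type*} [NormedAddCommGroup E] [InnerProductSpace ℂ E]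
    {N : Set (E →L[ℂ] E)}
    (φ : (E →L[ℂ] E) → E →L[ℂ] E) (hmem : ∀ P ∈ N, φ P ∈ N) :
    IsClosed {S : E →L[ℂ] E | S ∈ nestAlg N ∧ ∀ P ∈ N, (1 - φ P) * S * P = 0} ∧
    (0 : E →L[ℂ] E) ∈ {S | S ∈ nestAlg N ∧ ∀ P ∈ N, (1 - φ P) * S * P = 0} ∧
    (∀ S ∈ {S : E →L[ℂ] E | S ∈ nestAlg N ∧ ∀ P ∈ N, (1 - φ P) * S * P = 0},
      ∀ S' ∈ {S : E →L[ℂ] E | S ∈ nestAlg N ∧ ∀ P ∈ N, (1 - φ P) * S * P = 0},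
        S + S' ∈ {S : E →L[ℂ] E | S ∈ nestAlg N ∧ ∀ P ∈ N, (1 - φ P) * S * P = 0}) ∧
    (∀ c : ℂ, ∀ S ∈ {S : E →L[ℂ] E | S ∈ nestAlg N ∧ ∀ P ∈ N, (1 - φ P) * S * P = 0},
        c • S ∈ {S : E →L[ℂ] E | S ∈ nestAlg N ∧ ∀ P ∈ N, (1 - φ P) * S * P = 0}) ∧
    (∀ T ∈ nestAlg N, ∀ S ∈ {S : E →L[ℂ] E | S ∈ nestAlg N ∧ ∀ P ∈ N, (1 - φ P) * S * P = 0},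
        T * S ∈ {S : E →L[ℂ] E | S ∈ nestAlg N ∧ ∀ P ∈ N, (1 - φ P) * S * P = 0} ∧
        S * T ∈ {S : E →L[ℂ] E | S ∈ nestAlg N ∧ ∀ P ∈ N, (1 - φ P) * S * P = 0}) := by
  refine ⟨?closed, ?zero, ?add, ?smul, ?mul⟩
  case closed =>
    exact (isClosed_setOf_forall_mul_mul_eq_zero N (1 - ·) id).inter
      (isClosed_setOf_forall_mul_mul_eq_zero N (1 - φ ·) id)
  case zero => exact ⟨fun P _ => by simp, fun P _ => by simp⟩
  case add =>
    rintro S ⟨hS, hSφ⟩ S' ⟨hS', hS'φ⟩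
    exact ⟨fun P hP => by rw [mul_add, add_mul, hS P hP, hS' P hP, add_zero],
      fun P hP => by rw [mul_add, add_mul, hSφ P hP, hS'φ P hP, add_zero]⟩
  case smul =>
    rintro c S ⟨hS, hSφ⟩
    exact ⟨fun P hP => by rw [mul_smul_comm, smul_mul_assoc, hS P hP, smul_zero],
      fun P hP => by rw [mul_smul_comm, smul_mul_assoc, hSφ P hP, smul_zero]⟩
  case mul =>
    rintro T hT S ⟨hS, hSφ⟩
    exact ⟨⟨fun P hP => one_sub_mul_mul_mul_eq_zero_of_left (hT P hP) (hS P hP),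
        fun P hP => one_sub_mul_mul_mul_eq_zero_of_left (hT (φ P) (hmem P hP)) (hSφ P hP)⟩,
      ⟨fun P hP => one_sub_mul_mul_mul_eq_zero_of_right (hT P hP) (hS P hP),
        fun P hP => one_sub_mul_mul_mul_eq_zero_of_right (hT P hP) (hSφ P hP)⟩⟩

/-- The set `𝔅 = {S ∈ 𝒯(𝒩) : φ(P)⊥ S P = 0 ∀ P ∈ 𝒩}` associated to an order
homomorphism `φ` on the nest is a norm closed two-sided ideal of the nest algebra. -/
theorem prime_condition_assoc_ideal {E : Type*} [NormedAddCommGroup E] [InnerProductSpace ℂ E] [CompleteSpace E]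
    {N : Set (E →L[ℂ] E)} (hN : IsCompleteNest N)
    (φ : (E →L[ℂ] E) → E →L[ℂ] E) (hmem : ∀ P ∈ N, φ P ∈ N)
    (hmono : ∀ P ∈ N, ∀ Q ∈ N, projLE P Q → projLE (φ P) (φ Q)) :
    IsClosed {S : E →L[ℂ] E | S ∈ nestAlg N ∧ ∀ P ∈ N, (1 - φ P) * S * P = 0} ∧
    (0 : E →L[ℂ] E) ∈ {S | S ∈ nestAlg N ∧ ∀ P ∈ N, (1 - φ P) * S * P = 0} ∧
    (∀ S ∈ {S : E →L[ℂ] E | S ∈ nestAlg N ∧ ∀ P ∈ N, (1 - φ P) * S * P = 0},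
      ∀ S' ∈ {S : E →L[ℂ] E | S ∈ nestAlg N ∧ ∀ P ∈ N, (1 - φ P) * S * P = 0},
        S + S' ∈ {S : E →L[ℂ] E | S ∈ nestAlg N ∧ ∀ P ∈ N, (1 - φ P) * S * P = 0}) ∧
    (∀ c : ℂ, ∀ S ∈ {S : E →L[ℂ] E | S ∈ nestAlg N ∧ ∀ P ∈ N, (1 - φ P) * S * P = 0},
        c • S ∈ {S : E →L[ℂ] E | S ∈ nestAlg N ∧ ∀ P ∈ N, (1 - φ P) * S * P = 0}) ∧
    (∀ T ∈ nestAlg N, ∀ S ∈ {S : E →L[ℂ] E | S ∈ nestAlg N ∧ ∀ P ∈ N, (1 - φ P) * S * P = 0},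
        T * S ∈ {S : E →L[ℂ] E | S ∈ nestAlg N ∧ ∀ P ∈ N, (1 - φ P) * S * P = 0} ∧
        S * T ∈ {S : E →L[ℂ] E | S ∈ nestAlg N ∧ ∀ P ∈ N, (1 - φ P) * S * P = 0}) :=
  prime_condition_assoc_ideal_general φ hmem
end
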